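/- Let ℋ_A, ℋ_B be finite-dimensional complex Hilbert spaces with d_A ≥ 2 and d_B ≥ 2. There exists a quantum state ρ₀ on ℋ_A ⊗ ℋ_B such that for every ε ∈ (0,1) there is a quantum state ρ_ε on ℋ_A ⊗ ℋ_B with ‖ρ₀ − ρ_ε‖₁ = √ε, Ĥ_{ρ₀}(A|B) = log 2, and Ĥ_{ρ_ε}(A|B) = 0. Consequently, the BS-conditional entropy ρ ↦ Ĥ_ρ(A|B) is not continuous on the set of quantum states on ℋ_A ⊗ ℋ_B. -/

import Mathlib

open Matrix MeasureTheory
open scoped Kronecker Classical ComplexOrder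

noncomputable section

namespace QPaper

variable {n : Type*}

/-- A quantum state: positive semidefinite matrix with trace one. -/
def IsState [Fintype n] (ρ : Matrix n n ℂ) : Prop :=
  ρ.PosSemidef ∧ ρ.trace = 1

/-- The trace norm of a matrix: `tr √(XᴴX)`. -/
noncomputable def traceNorm [Fintype n] [DecidableEq n] (X : Matrix n n ℂ) : ℝ :=
  (((Matrix.posSemidef_conjTranspose_mul_self X).1.eigenvectorUnitary.1 *
      Matrix.diagonal (((↑) : ℝ → ℂ) ∘ (Real.sqrt ·) ∘ (Matrix.posSemidef_conjTranspose_mul_self X).1.eigenvalues) *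
      (star (Matrix.posSemidef_conjTranspose_mul_self X).1.eigenvectorUnitary : Matrix n n ℂ)).trace).re

/-- Functional calculus for Hermitian matrices: apply `f` to the eigenvalues. -/
noncomputable def matFun [Fintype n] [DecidableEq n] (f : ℝ → ℂ) (A : Matrix n n ℂ) :
    Matrix n n ℂ :=
  if hA : A.IsHermitian then
    (hA.eigenvectorUnitary : Matrix n n ℂ) *
      Matrix.diagonal (fun i => f (hA.eigenvalues i)) *
        (hA.eigenvectorUnitary : Matrix n n ℂ)ᴴ
  else 0

/-- Matrix logarithm on the support (0 ↦ 0). -/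
noncomputable def mlog [Fintype n] [DecidableEq n] (A : Matrix n n ℂ) : Matrix n n ℂ :=
  matFun (fun x => (Real.log x : ℂ)) A

/-- Real matrix powers on the support (Moore-Penrose style, 0 ↦ 0 for r ≠ 0). -/
noncomputable def mpow [Fintype n] [DecidableEq n] (A : Matrix n n ℂ) (r : ℝ) : Matrix n n ℂ :=
  matFun (fun x => ((x ^ r : ℝ) : ℂ)) A

/-- Complex matrix powers on the support (0 ↦ 0). -/
noncomputable def mcpow [Fintype n] [DecidableEq n] (A : Matrix n n ℂ) (z : ℂ) : Matrix n n ℂ :=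
  matFun (fun x => if x = 0 then 0 else (x : ℂ) ^ z) A

/-- The matrix `A log A`, functional calculus for `x ↦ x log x` (0 ↦ 0). -/
noncomputable def mXLogX [Fintype n] [DecidableEq n] (A : Matrix n n ℂ) : Matrix n n ℂ :=
  matFun (fun x => ((x * Real.log x : ℝ) : ℂ)) A

/-- Umegaki relative entropy `D(ρ‖K) = tr[ρ (log ρ - log K)]`. -/
noncomputable def relEnt [Fintype n] [DecidableEq n] (ρ K : Matrix n n ℂ) : ℝ :=
  ((ρ * (mlog ρ - mlog K)).trace).re

/-- Belavkin–Staszewski entropy `D̂(ρ‖K) = tr[ρ log(ρ^{1/2} K⁻¹ ρ^{1/2})]`. -/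
noncomputable def bsEnt [Fintype n] [DecidableEq n] (ρ K : Matrix n n ℂ) : ℝ :=
  ((ρ * mlog (mpow ρ (1/2) * mpow K (-1) * mpow ρ (1/2))).trace).re

/-- von Neumann entropy. -/
noncomputable def vnEnt [Fintype n] [DecidableEq n] (ρ : Matrix n n ℂ) : ℝ :=
  -(((ρ * mlog ρ).trace).re)

/-- Operator norm of a matrix. -/
noncomputable def opNorm [Fintype n] [DecidableEq n] (X : Matrix n n ℂ) : ℝ :=
  ‖Matrix.toEuclideanCLM (𝕜 := ℂ) X‖

/-- `ker K ⊆ ker ρ`. -/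
def kerLE [Fintype n] (K ρ : Matrix n n ℂ) : Prop :=
  ∀ v : n → ℂ, K.mulVec v = 0 → ρ.mulVec v = 0

/-- partial trace over the first factor. -/
noncomputable def ptrA {a b : Type*} [Fintype a] (ρ : Matrix (a × b) (a × b) ℂ) :
    Matrix b b ℂ :=
  Matrix.of fun i j => ∑ x : a, ρ (x, i) (x, j)

/-- partial trace over the second factor. -/
noncomputable def ptrB {a b : Type*} [Fintype b] (ρ : Matrix (a × b) (a × b) ℂ) :
    Matrix a a ℂ :=
  Matrix.of fun i j => ∑ x : b, ρ (i, x) (j, x)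

/-- partial trace over the middle factor of a tripartite system. -/
noncomputable def ptrMid {a b c : Type*} [Fintype b]
    (ρ : Matrix (a × b × c) (a × b × c) ℂ) : Matrix (a × c) (a × c) ℂ :=
  Matrix.of fun p q => ∑ y : b, ρ (p.1, y, p.2) (q.1, y, q.2)

/-- Conditional entropy `H_ρ(A|B) = S(ρ_{AB}) - S(ρ_B)`. -/
noncomputable def condEnt {a b : Type*} [Fintype a] [Fintype b] [DecidableEq a] [DecidableEq b]
    (ρ : Matrix (a × b) (a × b) ℂ) : ℝ :=
  vnEnt ρ - vnEnt (ptrA ρ)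

/-- Mutual information `I_ρ(A:B) = S(ρ_A) + S(ρ_B) - S(ρ_{AB})`. -/
noncomputable def mutInfo {a b : Type*} [Fintype a] [Fintype b] [DecidableEq a] [DecidableEq b]
    (ρ : Matrix (a × b) (a × b) ℂ) : ℝ :=
  vnEnt (ptrB ρ) + vnEnt (ptrA ρ) - vnEnt ρ

/-- Conditional mutual information `I_ρ(A:B|C)`. -/
noncomputable def condMutInfo {a b c : Type*} [Fintype a] [Fintype b] [Fintype c]
    [DecidableEq a] [DecidableEq b] [DecidableEq c]
    (ρ : Matrix (a × b × c) (a × b × c) ℂ) : ℝ :=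
  vnEnt (ptrMid ρ) + vnEnt (ptrA ρ) - vnEnt (ptrA (ptrA ρ)) - vnEnt ρ

/-- BS-conditional entropy `Ĥ_ρ(A|B) = -D̂(ρ ‖ 𝟙_A ⊗ ρ_B)`. -/
noncomputable def bsCondEnt {a b : Type*} [Fintype a] [Fintype b] [DecidableEq a] [DecidableEq b]
    (ρ : Matrix (a × b) (a × b) ℂ) : ℝ :=
  -(bsEnt ρ ((1 : Matrix a a ℂ) ⊗ₖ ptrA ρ))

/-- BS-mutual information `Î_ρ(A:B) = D̂(ρ ‖ ρ_A ⊗ ρ_B)`. -/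
noncomputable def bsMutInfo {a b : Type*} [Fintype a] [Fintype b] [DecidableEq a] [DecidableEq b]
    (ρ : Matrix (a × b) (a × b) ℂ) : ℝ :=
  bsEnt ρ (ptrB ρ ⊗ₖ ptrA ρ)

/-- BS-conditional mutual information `Î_ρ(A:B|C) = Ĥ_ρ(A|C) - Ĥ_ρ(A|BC)`. -/
noncomputable def bsCondMutInfo {a b c : Type*} [Fintype a] [Fintype b] [Fintype c]
    [DecidableEq a] [DecidableEq b] [DecidableEq c]
    (ρ : Matrix (a × b × c) (a × b × c) ℂ) : ℝ :=
  bsCondEnt (ptrMid ρ) - bsCondEnt (a := a) (b := b × c) ρ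

/-- Binary entropy. -/
noncomputable def binEnt (p : ℝ) : ℝ :=
  -(p * Real.log p) - (1 - p) * Real.log (1 - p)

/-- The function `f_{c₁,c₂}`. -/
noncomputable def fcc (c₁ c₂ p : ℝ) : ℝ :=
  p * Real.log (p + (1 - p) * c₁) + (1 - p) * Real.log ((1 - p) + p * c₂)

/-- The probability density `β₀`. -/
noncomputable def beta0 (t : ℝ) : ℝ :=
  (Real.pi / 2) * (Real.cosh (Real.pi * t) + 1)⁻¹

/-!
The witnesses are the classical–quantum states
`ρ_t = ½ (|a₀⟩⟨a₀| ⊗ |w_t⟩⟨w_t| + |a₁⟩⟨a₁| ⊗ |w_{-t}⟩⟨w_{-t}|)` with `w_t = √(1 - t²) |b₀⟩ + t |b₁⟩`.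
Each `ρ_t` is half a rank-two projection `P_t`, and its marginal is `ρ_B = diag(1 - t², t²)`, so
`ρ_t^{1/2} (𝟙 ⊗ ρ_B)⁻¹ ρ_t^{1/2} = ½ ⟨w_t| ρ_B⁻¹ |w_t⟩ P_t`.
For `t ≠ 0` the bracket is `2`, the sandwich is the projection `P_t` and `Ĥ(A|B) = 0`; at `t = 0`
the pseudo-inverse annihilates `|b₁⟩`, the bracket drops to `1` and `Ĥ(A|B) = log 2`.
Meanwhile `‖ρ₀ - ρ_t‖₁ = 2t`, because `(ρ₀ - ρ_t)² = (t/2)²` times a rank-four projection.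
-/

lemma cfc_smul_isStarProjection {A : Type*} [Ring A] [StarRing A] [TopologicalSpace A]
    [Algebra ℝ A] [ContinuousFunctionalCalculus ℝ A IsSelfAdjoint] [ContinuousMap.UniqueHom ℝ A]
    {P : A} (hP : IsStarProjection P) (c : ℝ) {g : ℝ → ℝ} (hg : g 0 = 0) :
    cfc g (c • P) = g c • P := by
  have hspec := hP.isIdempotentElem.spectrum_subset ℝ
  have hfin : ((c • ·) '' spectrum ℝ P).Finite := ((Set.toFinite _).subset hspec).image _
  rw [← cfc_comp_smul c g P (hfin.continuousOn g) hP.isSelfAdjoint,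
    ← cfc_const_mul_id (g c) P hP.isSelfAdjoint]
  refine cfc_congr fun x hx => ?_
  rcases hspec hx with rfl | rfl <;> simp [hg]

section FunctionalCalculus

variable {n : Type*} [Fintype n] [DecidableEq n]

lemma cfc_diagonal (g : ℝ → ℝ) (d : n → ℝ) :
    cfc g (diagonal fun i => (d i : ℂ)) = diagonal fun i => (g (d i) : ℂ) := by
  set q := Lagrange.interpolate (Finset.univ.image d) id g
  have hq : ∀ i, q.eval (d i) = g (d i) := fun i =>
    Lagrange.eval_interpolate_at_node g (Set.injOn_id _)
      (Finset.mem_image_of_mem d (Finset.mem_univ i))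
  have hsa : IsSelfAdjoint (diagonal fun i => (d i : ℂ)) := by
    simp [IsSelfAdjoint, star_eq_conjTranspose, diagonal_conjTranspose]
  have hspec : spectrum ℝ (diagonal fun i => (d i : ℂ)) ⊆ Set.range d := by
    rw [← spectrum.preimage_algebraMap ℂ, spectrum_diagonal]
    rintro x ⟨i, hi⟩
    exact ⟨i, Complex.ofReal_inj.mp hi⟩
  rw [cfc_congr (g := fun x => q.eval x) fun x hx => ?_, cfc_polynomial q _ hsa]
  · rw [show (diagonal fun i => (d i : ℂ)) = diagonalAlgHom ℝ (fun i => (d i : ℂ)) from rfl,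
      Polynomial.aeval_algHom_apply, diagonalAlgHom_apply, Polynomial.aeval_pi_apply]
    exact congrArg diagonal (funext fun i => by rw [← hq i]; exact Polynomial.aeval_ofReal q (d i))
  · obtain ⟨i, rfl⟩ := hspec hx
    exact (hq i).symm

lemma matFun_ofReal_eq_cfc {A : Matrix n n ℂ} (hA : A.IsHermitian) (g : ℝ → ℝ) :
    matFun (fun x => (g x : ℂ)) A = cfc g A := by
  rw [hA.cfc_eq, IsHermitian.cfc, Unitary.conjStarAlgAut_apply, matFun, dif_pos hA,
    star_eq_conjTranspose]
  rfl

lemma traceNorm_eq_cfc (X : Matrix n n ℂ) :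
    traceNorm X = (cfc Real.sqrt (Xᴴ * X)).trace.re := by
  rw [(posSemidef_conjTranspose_mul_self X).1.cfc_eq, IsHermitian.cfc,
    Unitary.conjStarAlgAut_apply]
  rfl

lemma matFun_smul_isStarProjection {P : Matrix n n ℂ} (hP : IsStarProjection P) (c : ℝ)
    {g : ℝ → ℝ} (hg : g 0 = 0) : matFun (fun x => (g x : ℂ)) (c • P) = g c • P := by
  rw [matFun_ofReal_eq_cfc (IsSelfAdjoint.smul (.all c) hP.isSelfAdjoint),
    cfc_smul_isStarProjection hP c hg]

lemma mpow_diagonal (d : n → ℝ) (r : ℝ) :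
    mpow (diagonal fun i => (d i : ℂ)) r = diagonal fun i => ((d i ^ r : ℝ) : ℂ) := by
  have hsa : (diagonal fun i => (d i : ℂ)).IsHermitian := by
    simp [IsHermitian, diagonal_conjTranspose]
  rw [mpow, matFun_ofReal_eq_cfc hsa, cfc_diagonal]

lemma traceNorm_eq_of_conjTranspose_mul_self {X Q : Matrix n n ℂ} (hQ : IsStarProjection Q)
    {c : ℝ} (hc : 0 ≤ c) (hX : Xᴴ * X = c ^ 2 • Q) : traceNorm X = c * Q.trace.re := by
  rw [traceNorm_eq_cfc, hX, cfc_smul_isStarProjection hQ _ Real.sqrt_zero, Real.sqrt_sq hc,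
    trace_smul, Complex.real_smul, Complex.re_ofReal_mul]

lemma bsEnt_smul_isStarProjection {P K : Matrix n n ℂ} (hP : IsStarProjection P) {s c : ℝ}
    (hs : 0 ≤ s) (hK : P * mpow K (-1) * P = c • P) :
    bsEnt (s • P) K = (s • P).trace.re * Real.log (s * c) := by
  have hroot : mpow (s • P) (1 / 2) = (s ^ (1 / 2 : ℝ)) • P :=
    matFun_smul_isStarProjection hP s (Real.zero_rpow (by norm_num))
  have hsandwich : mpow (s • P) (1 / 2) * mpow K (-1) * mpow (s • P) (1 / 2) = (s * c) • P := by
    rw [hroot, smul_mul_assoc, smul_mul_assoc, mul_smul_comm, hK, smul_smul, smul_smul,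
      ← Real.rpow_add' hs (by norm_num)]
    norm_num
  rw [bsEnt, hsandwich, mlog, matFun_smul_isStarProjection hP _ Real.log_zero, smul_mul_smul,
    hP.isIdempotentElem.eq, trace_smul, trace_smul, Complex.real_smul, Complex.real_smul,
    Complex.re_ofReal_mul, Complex.re_ofReal_mul]
  ring

end FunctionalCalculus

section Bipartite

variable {α β : Type*}

lemma one_kronecker_diagonal [DecidableEq α] [DecidableEq β] (d : β → ℂ) :
    (1 : Matrix α α ℂ) ⊗ₖ diagonal d = diagonal fun x => d x.2 := by
  rw [← diagonal_one, diagonal_kronecker_diagonal]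
  simp

lemma kronecker_sub {R : Type*} [Ring R] (A : Matrix α α R) (B C : Matrix β β R) :
    A ⊗ₖ (B - C) = A ⊗ₖ B - A ⊗ₖ C := by
  ext
  simp [mul_sub]

variable [Fintype α]

lemma ptrA_add (X Y : Matrix (α × β) (α × β) ℂ) : ptrA (X + Y) = ptrA X + ptrA Y := by
  ext i j
  simp [ptrA, Finset.sum_add_distrib]

lemma ptrA_smul (c : ℝ) (X : Matrix (α × β) (α × β) ℂ) : ptrA (c • X) = c • ptrA X := by
  ext i j
  simp [ptrA, Finset.smul_sum]

lemma ptrA_kronecker (A : Matrix α α ℂ) (B : Matrix β β ℂ) : ptrA (A ⊗ₖ B) = A.trace • B := by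
  ext i j
  simp [ptrA, trace, Finset.sum_mul]

variable [DecidableEq α] [Fintype β] {E F : Matrix α α ℂ}

lemma kronecker_add_mul_kronecker_add (hE : IsIdempotentElem E) (hF : IsIdempotentElem F)
    (hEF : E * F = 0) (hFE : F * E = 0) (a b c d : Matrix β β ℂ) :
    (E ⊗ₖ a + F ⊗ₖ b) * (E ⊗ₖ c + F ⊗ₖ d) = E ⊗ₖ (a * c) + F ⊗ₖ (b * d) := by
  simp only [add_mul, mul_add, ← mul_kronecker_mul, hE.eq, hF.eq, hEF, hFE, zero_kronecker,
    add_zero, zero_add]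

lemma kronecker_add_mul_one_kronecker_mul (hE : IsIdempotentElem E) (hF : IsIdempotentElem F)
    (hEF : E * F = 0) (hFE : F * E = 0) (a b D : Matrix β β ℂ) :
    (E ⊗ₖ a + F ⊗ₖ b) * ((1 : Matrix α α ℂ) ⊗ₖ D) * (E ⊗ₖ a + F ⊗ₖ b)
      = E ⊗ₖ (a * D * a) + F ⊗ₖ (b * D * b) := by
  rw [add_mul, ← mul_kronecker_mul, ← mul_kronecker_mul, mul_one, mul_one,
    kronecker_add_mul_kronecker_add hE hF hEF hFE]

lemma isStarProjection_kronecker_add (hE : IsStarProjection E) (hF : IsStarProjection F)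
    (hEF : E * F = 0) {p q : Matrix β β ℂ} (hp : IsStarProjection p) (hq : IsStarProjection q) :
    IsStarProjection (E ⊗ₖ p + F ⊗ₖ q) := by
  have hFE : F * E = 0 := by
    simpa [hE.isSelfAdjoint.star_eq, hF.isSelfAdjoint.star_eq] using congrArg star hEF
  refine ⟨?_, ?_⟩
  · rw [IsIdempotentElem, kronecker_add_mul_kronecker_add hE.isIdempotentElem
      hF.isIdempotentElem hEF hFE, hp.isIdempotentElem.eq, hq.isIdempotentElem.eq]
  · rw [IsSelfAdjoint, star_add, star_eq_conjTranspose, star_eq_conjTranspose,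
      conjTranspose_kronecker, conjTranspose_kronecker, ← star_eq_conjTranspose,
      ← star_eq_conjTranspose, ← star_eq_conjTranspose, ← star_eq_conjTranspose,
      hE.isSelfAdjoint.star_eq, hF.isSelfAdjoint.star_eq, hp.isSelfAdjoint.star_eq,
      hq.isSelfAdjoint.star_eq]

end Bipartite

section RankOne

variable {β : Type*}

def ketBra (v : β → ℂ) : Matrix β β ℂ := vecMulVec v (star v)

variable [Fintype β]

lemma ketBra_mul_mul_ketBra (v : β → ℂ) (M : Matrix β β ℂ) :
    ketBra v * M * ketBra v = (star v ⬝ᵥ (M *ᵥ v)) • ketBra v := by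
  rw [ketBra, vecMulVec_mul, vecMulVec_mul_vecMulVec, ← dotProduct_mulVec, vecMulVec_smul]

lemma isStarProjection_ketBra {v : β → ℂ} (hv : star v ⬝ᵥ v = 1) :
    IsStarProjection (ketBra v) := by
  refine ⟨?_, ?_⟩
  · rw [IsIdempotentElem, ketBra, vecMulVec_mul_vecMulVec, hv, one_smul]
  · rw [IsSelfAdjoint, ketBra, star_eq_conjTranspose, conjTranspose_vecMulVec, star_star]

lemma ketBra_sub_ketBra_mul_self {v w : β → ℂ} (hv : star v ⬝ᵥ v = 1) (hw : star w ⬝ᵥ w = 1) :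
    (ketBra v - ketBra w) * (ketBra v - ketBra w)
      = ketBra v + ketBra w - (star v ⬝ᵥ w) • vecMulVec v (star w)
        - (star w ⬝ᵥ v) • vecMulVec w (star v) := by
  simp only [ketBra, sub_mul, mul_sub, vecMulVec_mul_vecMulVec, hv, hw, one_smul, vecMulVec_smul]
  abel

end RankOne

section Construction

variable {α β : Type*} [DecidableEq α] [DecidableEq β]

def tiltedVec (b₀ b₁ : β) (t : ℝ) : β → ℂ :=
  Pi.single b₀ (Real.sqrt (1 - t ^ 2) : ℂ) + Pi.single b₁ (t : ℂ)

def tiltedWeights (b₀ b₁ : β) (t : ℝ) : β → ℝ :=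
  Pi.single b₀ (1 - t ^ 2 : ℝ) + Pi.single b₁ (t ^ 2)

def cqProj (a₀ a₁ : α) (b₀ b₁ : β) (t : ℝ) : Matrix (α × β) (α × β) ℂ :=
  single a₀ a₀ 1 ⊗ₖ ketBra (tiltedVec b₀ b₁ t) + single a₁ a₁ 1 ⊗ₖ ketBra (tiltedVec b₀ b₁ (-t))

def cqState (a₀ a₁ : α) (b₀ b₁ : β) (t : ℝ) : Matrix (α × β) (α × β) ℂ :=
  (2⁻¹ : ℝ) • cqProj a₀ a₁ b₀ b₁ t

lemma continuous_cqState (a₀ a₁ : α) (b₀ b₁ : β) : Continuous (cqState a₀ a₁ b₀ b₁) := by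
  refine continuous_matrix fun p q => ?_
  simp only [cqState, cqProj, ketBra, tiltedVec, Matrix.smul_apply, Matrix.add_apply,
    kroneckerMap_apply, vecMulVec_apply, Pi.add_apply, Pi.star_apply, Pi.single_apply]
  split_ifs <;> fun_prop

variable {a₀ a₁ : α} {b₀ b₁ : β}

lemma ketBra_tiltedVec_add_ketBra_tiltedVec_neg (hb : b₀ ≠ b₁) {t : ℝ} (ht : t ^ 2 ≤ 1) :
    ketBra (tiltedVec b₀ b₁ t) + ketBra (tiltedVec b₀ b₁ (-t))
      = (2 : ℝ) • diagonal fun b => (tiltedWeights b₀ b₁ t b : ℂ) := by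
  have hu : ((Real.sqrt (1 - t ^ 2) : ℝ) : ℂ) ^ 2 = 1 - (t : ℂ) ^ 2 := by
    exact_mod_cast Real.sq_sqrt (by linarith)
  have hcases : ∀ k : β, k = b₀ ∨ k = b₁ ∨ (b₀ ≠ k ∧ b₁ ≠ k) := by tauto
  ext i j
  rcases hcases i with rfl | rfl | ⟨hi0, hi1⟩ <;> rcases hcases j with rfl | rfl | ⟨hj0, hj1⟩ <;>
    simp [ketBra, tiltedVec, tiltedWeights, diagonal_apply, vecMulVec_apply, hb.symm, *] <;>
    first | ring1 | linear_combination 2 * hu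

lemma ptrA_cqState [Fintype α] (hb : b₀ ≠ b₁) {t : ℝ} (ht : t ^ 2 ≤ 1) :
    ptrA (cqState a₀ a₁ b₀ b₁ t) = diagonal fun b => (tiltedWeights b₀ b₁ t b : ℂ) := by
  rw [cqState, ptrA_smul, cqProj, ptrA_add, ptrA_kronecker, ptrA_kronecker, trace_single_eq_same,
    trace_single_eq_same, one_smul, one_smul, ketBra_tiltedVec_add_ketBra_tiltedVec_neg hb ht,
    smul_smul]
  norm_num

variable [Fintype α] [Fintype β]

lemma star_tiltedVec_dotProduct_diagonal_mulVec (hb : b₀ ≠ b₁) {t : ℝ} (ht : t ^ 2 ≤ 1)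
    (g : β → ℝ) :
    star (tiltedVec b₀ b₁ t) ⬝ᵥ (diagonal (fun b => (g b : ℂ)) *ᵥ tiltedVec b₀ b₁ t)
      = ((1 - t ^ 2) * g b₀ + t ^ 2 * g b₁ : ℝ) := by
  have hu : ((Real.sqrt (1 - t ^ 2) : ℝ) : ℂ) ^ 2 = 1 - (t : ℂ) ^ 2 := by
    exact_mod_cast Real.sq_sqrt (by linarith)
  simp only [tiltedVec, star_add, ← Pi.single_star, mulVec_add, diagonal_mulVec_single,
    add_dotProduct, dotProduct_add, single_dotProduct, Pi.single_apply, hb, hb.symm, if_true,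
    if_false, Complex.star_def, Complex.conj_ofReal]
  push_cast
  linear_combination (g b₀ : ℂ) * hu

lemma star_tiltedVec_dotProduct_self (hb : b₀ ≠ b₁) {t : ℝ} (ht : t ^ 2 ≤ 1) :
    star (tiltedVec b₀ b₁ t) ⬝ᵥ tiltedVec b₀ b₁ t = 1 := by
  simpa [diagonal_one] using star_tiltedVec_dotProduct_diagonal_mulVec hb ht fun _ => 1

lemma ketBra_tiltedVec_zero_sub_mul_self (hb : b₀ ≠ b₁) {t : ℝ} (ht : t ^ 2 ≤ 1) :
    (ketBra (tiltedVec b₀ b₁ 0) - ketBra (tiltedVec b₀ b₁ t))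
        * (ketBra (tiltedVec b₀ b₁ 0) - ketBra (tiltedVec b₀ b₁ t))
      = t ^ 2 • diagonal (Pi.single b₀ 1 + Pi.single b₁ 1) := by
  rw [ketBra_sub_ketBra_mul_self (star_tiltedVec_dotProduct_self hb (by norm_num))
    (star_tiltedVec_dotProduct_self hb ht)]
  have hu : ((Real.sqrt (1 - t ^ 2) : ℝ) : ℂ) ^ 2 = 1 - (t : ℂ) ^ 2 := by
    exact_mod_cast Real.sq_sqrt (by linarith)
  have hcases : ∀ k : β, k = b₀ ∨ k = b₁ ∨ (b₀ ≠ k ∧ b₁ ≠ k) := by tauto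
  ext i j
  rcases hcases i with rfl | rfl | ⟨hi0, hi1⟩ <;> rcases hcases j with rfl | rfl | ⟨hj0, hj1⟩ <;>
    simp [ketBra, tiltedVec, diagonal_apply, vecMulVec_apply, hb.symm, *] <;>
    first | ring1 | linear_combination (-1 : ℂ) * hu

lemma isStarProjection_single (a : α) : IsStarProjection (single a a (1 : ℂ)) :=
  ⟨by simp [IsIdempotentElem], by simp [IsSelfAdjoint, star_eq_conjTranspose]⟩

lemma isStarProjection_diagonal_single_add_single (hb : b₀ ≠ b₁) :
    IsStarProjection (diagonal (Pi.single b₀ 1 + Pi.single b₁ 1 : β → ℂ)) := by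
  refine ⟨?_, ?_⟩
  · rw [IsIdempotentElem, diagonal_mul_diagonal]
    congr 1
    ext b
    by_cases h0 : b = b₀ <;> by_cases h1 : b = b₁ <;> simp_all
  · simp [IsSelfAdjoint, star_eq_conjTranspose, diagonal_conjTranspose]

lemma isStarProjection_cqProj (ha : a₀ ≠ a₁) (hb : b₀ ≠ b₁) {t : ℝ} (ht : t ^ 2 ≤ 1) :
    IsStarProjection (cqProj a₀ a₁ b₀ b₁ t) :=
  isStarProjection_kronecker_add (isStarProjection_single a₀) (isStarProjection_single a₁)
    (single_mul_single_of_ne 1 a₀ a₀ a₁ ha 1)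
    (isStarProjection_ketBra (star_tiltedVec_dotProduct_self hb ht))
    (isStarProjection_ketBra (star_tiltedVec_dotProduct_self hb (by rwa [neg_sq])))

lemma trace_cqProj (hb : b₀ ≠ b₁) {t : ℝ} (ht : t ^ 2 ≤ 1) :
    (cqProj a₀ a₁ b₀ b₁ t).trace = 2 := by
  rw [cqProj, trace_add, trace_kronecker, trace_kronecker, trace_single_eq_same, ketBra,
    ketBra, trace_vecMulVec, trace_vecMulVec, dotProduct_comm, star_tiltedVec_dotProduct_self hb ht,
    dotProduct_comm, star_tiltedVec_dotProduct_self hb (by rwa [neg_sq])]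
  norm_num

lemma isState_cqState (ha : a₀ ≠ a₁) (hb : b₀ ≠ b₁) {t : ℝ} (ht : t ^ 2 ≤ 1) :
    IsState (cqState a₀ a₁ b₀ b₁ t) := by
  have hP := isStarProjection_cqProj ha hb ht
  have hPsq : (cqProj a₀ a₁ b₀ b₁ t)ᴴ * cqProj a₀ a₁ b₀ b₁ t = cqProj a₀ a₁ b₀ b₁ t := by
    rw [← star_eq_conjTranspose, hP.isSelfAdjoint.star_eq, hP.isIdempotentElem.eq]
  refine ⟨?_, ?_⟩
  · rw [cqState, ← hPsq]
    exact (posSemidef_conjTranspose_mul_self _).smul (by norm_num)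
  · rw [cqState, trace_smul, trace_cqProj hb ht]
    norm_num

lemma mpow_one_kronecker_ptrA_cqState (hb : b₀ ≠ b₁) {t : ℝ} (ht : t ^ 2 ≤ 1) :
    mpow ((1 : Matrix α α ℂ) ⊗ₖ ptrA (cqState a₀ a₁ b₀ b₁ t)) (-1)
      = (1 : Matrix α α ℂ) ⊗ₖ diagonal fun b => ((tiltedWeights b₀ b₁ t b ^ (-1 : ℝ) : ℝ) : ℂ) := by
  rw [ptrA_cqState hb ht, one_kronecker_diagonal, one_kronecker_diagonal,
    mpow_diagonal fun x : α × β => tiltedWeights b₀ b₁ t x.2]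

lemma cqProj_mul_one_kronecker_diagonal_mul (ha : a₀ ≠ a₁) (hb : b₀ ≠ b₁) {t : ℝ}
    (ht : t ^ 2 ≤ 1) (g : β → ℝ) :
    cqProj a₀ a₁ b₀ b₁ t * ((1 : Matrix α α ℂ) ⊗ₖ diagonal fun b => (g b : ℂ))
        * cqProj a₀ a₁ b₀ b₁ t
      = ((1 - t ^ 2) * g b₀ + t ^ 2 * g b₁) • cqProj a₀ a₁ b₀ b₁ t := by
  rw [cqProj, kronecker_add_mul_one_kronecker_mul (isStarProjection_single a₀).isIdempotentElem
    (isStarProjection_single a₁).isIdempotentElem (single_mul_single_of_ne 1 a₀ a₀ a₁ ha 1)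
    (single_mul_single_of_ne 1 a₁ a₁ a₀ ha.symm 1), ketBra_mul_mul_ketBra, ketBra_mul_mul_ketBra,
    star_tiltedVec_dotProduct_diagonal_mulVec hb ht,
    star_tiltedVec_dotProduct_diagonal_mulVec hb (by rwa [neg_sq]), neg_sq, smul_add,
    kronecker_smul, kronecker_smul, Complex.coe_smul, Complex.coe_smul]

lemma bsCondEnt_cqState (ha : a₀ ≠ a₁) (hb : b₀ ≠ b₁) {t : ℝ} (ht : t ^ 2 ≤ 1) :
    bsCondEnt (cqState a₀ a₁ b₀ b₁ t)
      = -Real.log (2⁻¹ * ((1 - t ^ 2) * (1 - t ^ 2)⁻¹ + t ^ 2 * (t ^ 2)⁻¹)) := by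
  have hK : cqProj a₀ a₁ b₀ b₁ t * mpow ((1 : Matrix α α ℂ) ⊗ₖ ptrA (cqState a₀ a₁ b₀ b₁ t)) (-1)
        * cqProj a₀ a₁ b₀ b₁ t
      = ((1 - t ^ 2) * (1 - t ^ 2)⁻¹ + t ^ 2 * (t ^ 2)⁻¹) • cqProj a₀ a₁ b₀ b₁ t := by
    rw [mpow_one_kronecker_ptrA_cqState hb ht, cqProj_mul_one_kronecker_diagonal_mul ha hb ht]
    simp only [tiltedWeights, Pi.add_apply, Pi.single_eq_same, Pi.single_eq_of_ne hb,
      Pi.single_eq_of_ne hb.symm, add_zero, zero_add, Real.rpow_neg_one]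
  have hbs : bsEnt (cqState a₀ a₁ b₀ b₁ t) _ = (cqState a₀ a₁ b₀ b₁ t).trace.re * _ :=
    bsEnt_smul_isStarProjection (isStarProjection_cqProj ha hb ht) (by norm_num) hK
  rw [bsCondEnt, hbs, (isState_cqState ha hb ht).2, Complex.one_re, one_mul]

lemma bsCondEnt_cqState_zero (ha : a₀ ≠ a₁) (hb : b₀ ≠ b₁) :
    bsCondEnt (cqState a₀ a₁ b₀ b₁ 0) = Real.log 2 := by
  rw [bsCondEnt_cqState ha hb (by norm_num)]
  simp [Real.log_inv]

lemma bsCondEnt_cqState_of_ne_zero (ha : a₀ ≠ a₁) (hb : b₀ ≠ b₁) {t : ℝ} (ht₀ : t ≠ 0)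
    (ht : t ^ 2 < 1) : bsCondEnt (cqState a₀ a₁ b₀ b₁ t) = 0 := by
  rw [bsCondEnt_cqState ha hb ht.le, mul_inv_cancel₀ (by linarith), mul_inv_cancel₀ (by positivity)]
  norm_num

lemma traceNorm_cqState_zero_sub (ha : a₀ ≠ a₁) (hb : b₀ ≠ b₁) {t : ℝ} (ht₀ : 0 ≤ t)
    (ht : t ^ 2 ≤ 1) : traceNorm (cqState a₀ a₁ b₀ b₁ 0 - cqState a₀ a₁ b₀ b₁ t) = 2 * t := by
  set Pb : Matrix β β ℂ := diagonal (Pi.single b₀ 1 + Pi.single b₁ 1)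
  have hQ := isStarProjection_kronecker_add (isStarProjection_single a₀)
    (isStarProjection_single a₁) (single_mul_single_of_ne 1 a₀ a₀ a₁ ha 1)
    (isStarProjection_diagonal_single_add_single hb) (isStarProjection_diagonal_single_add_single hb)
  have hdiff : cqState a₀ a₁ b₀ b₁ 0 - cqState a₀ a₁ b₀ b₁ t
      = (2⁻¹ : ℝ) • (single a₀ a₀ 1 ⊗ₖ (ketBra (tiltedVec b₀ b₁ 0) - ketBra (tiltedVec b₀ b₁ t))
        + single a₁ a₁ 1 ⊗ₖ (ketBra (tiltedVec b₀ b₁ 0) - ketBra (tiltedVec b₀ b₁ (-t)))) := by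
    rw [cqState, cqState, ← smul_sub, cqProj, cqProj, neg_zero, kronecker_sub, kronecker_sub]
    abel_nf
  have hsq : (cqState a₀ a₁ b₀ b₁ 0 - cqState a₀ a₁ b₀ b₁ t)ᴴ
        * (cqState a₀ a₁ b₀ b₁ 0 - cqState a₀ a₁ b₀ b₁ t)
      = (t / 2) ^ 2 • (single a₀ a₀ 1 ⊗ₖ Pb + single a₁ a₁ 1 ⊗ₖ Pb) := by
    rw [((isState_cqState ha hb (by norm_num)).1.1.sub (isState_cqState ha hb ht).1.1).eq, hdiff,
      smul_mul_smul, kronecker_add_mul_kronecker_add (isStarProjection_single a₀).isIdempotentElem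
      (isStarProjection_single a₁).isIdempotentElem (single_mul_single_of_ne 1 a₀ a₀ a₁ ha 1)
      (single_mul_single_of_ne 1 a₁ a₁ a₀ ha.symm 1), ketBra_tiltedVec_zero_sub_mul_self hb ht,
      ketBra_tiltedVec_zero_sub_mul_self hb (by rwa [neg_sq]), neg_sq, kronecker_smul,
      kronecker_smul, ← smul_add, smul_smul]
    congr 1
    ring
  have htr : (single a₀ a₀ 1 ⊗ₖ Pb + single a₁ a₁ 1 ⊗ₖ Pb).trace = 4 := by
    simp only [Pb, trace_add, trace_kronecker, trace_single_eq_same, trace_diagonal, Pi.add_apply,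
      Finset.sum_add_distrib, Finset.sum_pi_single', Finset.mem_univ, if_true]
    norm_num
  rw [traceNorm_eq_of_conjTranspose_mul_self hQ (by positivity) hsq, htr,
    show (4 : ℂ).re = 4 from rfl]
  ring

end Construction

section Discontinuity

open Filter Topology

variable {α β : Type*} [Fintype α] [DecidableEq α] [Nontrivial α]
  [Fintype β] [DecidableEq β] [Nontrivial β]

lemma sq_lt_one_of_mem_Ioo {t : ℝ} (ht : t ∈ Set.Ioo 0 1) : t ^ 2 < 1 := by
  nlinarith [ht.1, ht.2]

theorem exists_bsCondEnt_jump :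
    ∃ ρ₀ : Matrix (α × β) (α × β) ℂ, IsState ρ₀ ∧ bsCondEnt ρ₀ = Real.log 2 ∧
      ∀ ε : ℝ, 0 < ε → ε < 1 → ∃ ρε : Matrix (α × β) (α × β) ℂ, IsState ρε ∧
        traceNorm (ρ₀ - ρε) = Real.sqrt ε ∧ bsCondEnt ρε = 0 := by
  obtain ⟨a₀, a₁, ha⟩ := exists_pair_ne α
  obtain ⟨b₀, b₁, hb⟩ := exists_pair_ne β
  refine ⟨_, isState_cqState ha hb (by norm_num), bsCondEnt_cqState_zero ha hb,
    fun ε hε₀ hε₁ => ?_⟩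
  have ht : Real.sqrt ε / 2 ∈ Set.Ioo 0 1 := by
    constructor
    · positivity
    · linarith [Real.sqrt_le_one.mpr hε₁.le]
  refine ⟨_, isState_cqState ha hb (sq_lt_one_of_mem_Ioo ht).le, ?_,
    bsCondEnt_cqState_of_ne_zero ha hb ht.1.ne' (sq_lt_one_of_mem_Ioo ht)⟩
  rw [traceNorm_cqState_zero_sub ha hb ht.1.le (sq_lt_one_of_mem_Ioo ht).le]
  ring

theorem not_continuousOn_bsCondEnt :
    ¬ ContinuousOn (bsCondEnt (a := α) (b := β)) {ρ | IsState ρ} := by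
  intro hcont
  obtain ⟨a₀, a₁, ha⟩ := exists_pair_ne α
  obtain ⟨b₀, b₁, hb⟩ := exists_pair_ne β
  have hnear : ∀ᶠ t in 𝓝[>] (0 : ℝ), t ∈ Set.Ioo 0 1 := Ioo_mem_nhdsGT one_pos
  have hlim : Tendsto (fun t => bsCondEnt (cqState a₀ a₁ b₀ b₁ t)) (𝓝[>] 0)
      (𝓝 (bsCondEnt (cqState a₀ a₁ b₀ b₁ 0))) := by
    refine (hcont _ (isState_cqState ha hb (by norm_num))).tendsto.comp
      (tendsto_nhdsWithin_iff.2 ⟨?_, ?_⟩)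
    · exact (continuous_cqState a₀ a₁ b₀ b₁).continuousAt.tendsto.mono_left nhdsWithin_le_nhds
    · filter_upwards [hnear] with t ht using isState_cqState ha hb (sq_lt_one_of_mem_Ioo ht).le
  have hzero : ∀ᶠ t in 𝓝[>] (0 : ℝ), 0 = bsCondEnt (cqState a₀ a₁ b₀ b₁ t) := by
    filter_upwards [hnear] with t ht
    exact (bsCondEnt_cqState_of_ne_zero ha hb ht.1.ne' (sq_lt_one_of_mem_Ioo ht)).symm
  rw [bsCondEnt_cqState_zero ha hb] at hlim
  exact (Real.log_pos one_lt_two).ne' (tendsto_nhds_unique hlim (tendsto_const_nhds.congr' hzero))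

end Discontinuity

/-- **Discontinuity of the BS-conditional entropy**. -/
theorem bsCondEnt_discontinuous {dA dB : ℕ} (hA : 2 ≤ dA) (hB : 2 ≤ dB) :
    (∃ ρ₀ : Matrix (Fin dA × Fin dB) (Fin dA × Fin dB) ℂ, IsState ρ₀ ∧
      bsCondEnt ρ₀ = Real.log 2 ∧
      ∀ ε : ℝ, 0 < ε → ε < 1 →
        ∃ ρε : Matrix (Fin dA × Fin dB) (Fin dA × Fin dB) ℂ, IsState ρε ∧
          traceNorm (ρ₀ - ρε) = Real.sqrt ε ∧ bsCondEnt ρε = 0) ∧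
    ¬ ContinuousOn (bsCondEnt (a := Fin dA) (b := Fin dB))
        {ρ : Matrix (Fin dA × Fin dB) (Fin dA × Fin dB) ℂ | IsState ρ} := by
  have : Nontrivial (Fin dA) := Fin.nontrivial_iff_two_le.mpr hA
  have : Nontrivial (Fin dB) := Fin.nontrivial_iff_two_le.mpr hB
  exact ⟨exists_bsCondEnt_jump, not_continuousOn_bsCondEnt⟩

end QPaper
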